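/- arXiv:1907.04083 — 7 statements merged into one kernel-verified Lean document; each statement's English description precedes it below -/
import Mathlib

section
/- Let f : 2^E → ℝ be a normalized (f(∅)=0) monotone submodular function on a finite set E = {1,...,m}, and let S ⊆ E be a random subset such that P(i ∈ S) ≥ α for every i ∈ E, where α ∈ [0,1]. Then E[f(S)] ≥ α·f(E). -/
/-- Probabilistic covering lemma: if `f` is a normalized monotone submodular function on a
finite set `E` and `S` is a random subset with `P(i ∈ S) ≥ α` for every `i`, then
`E[f(S)] ≥ α · f(E)`. The random subset is modeled by a probability mass function `μ`
on `Finset E`. -/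
theorem covering_lemma {E : Type*} [Fintype E] [DecidableEq E]
    (f : Finset E → ℝ)
    (hnorm : f ∅ = 0)
    (hmono : ∀ X Y : Finset E, X ⊆ Y → f X ≤ f Y)
    (hsub : ∀ X Y : Finset E, f (X ∪ Y) + f (X ∩ Y) ≤ f X + f Y)
    (α : ℝ) (hα0 : 0 ≤ α) (hα1 : α ≤ 1)
    (μ : PMF (Finset E))
    (hmarg : ∀ i : E, α ≤ ∑ s : Finset E, (if i ∈ s then (μ s).toReal else 0)) :
    α * f Finset.univ ≤ ∑ s : Finset E, (μ s).toReal * f s := by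
  rcases isEmpty_or_nonempty E with h | h
  · have huniv : (Finset.univ : Finset E) = ∅ := Finset.univ_eq_empty
    rw [huniv, hnorm, mul_zero]
    apply Finset.sum_nonneg
    intro s _
    rw [Finset.eq_empty_of_isEmpty s, hnorm, mul_zero]
  · have : Inhabited E := Classical.inhabited_of_nonempty h
    set l : List E := Finset.univ.toList with hl
    set m : ℕ := l.length with hm
    have hnd : l.Nodup := Finset.nodup_toList _
    set P : ℕ → Finset E := fun k => (l.take k).toFinset with hP
    set e : ℕ → E := fun k => l.getD k default with he
    set d : ℕ → ℝ := fun k => f (P (k + 1)) - f (P k) with hd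
    have hstep : ∀ k < m, P (k + 1) = insert (e k) (P k) ∧ e k ∉ P k := by
      intro k hk
      have hget : l[k]? = some (e k) := by
        rw [he]
        simp only [List.getD_eq_getElem?_getD, List.getElem?_eq_getElem hk]
        simp
      have hek : e k = l[k] := by
        have := List.getElem?_eq_getElem (l := l) hk
        rw [this] at hget
        exact (Option.some.injEq _ _ ▸ hget.symm :)
      constructor
      · simp only [hP, List.take_succ, hget, Option.toList_some, List.toFinset_append]
        ext a
        simp [or_comm]
      · intro hmem
        simp only [hP, List.mem_toFinset] at hmem
        have hdisj : List.Disjoint (l.take k) (l.drop k) :=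
          List.disjoint_take_drop hnd le_rfl
        apply hdisj hmem
        have h0 : 0 < (l.drop k).length := by
          rw [List.length_drop]; omega
        have : (l.drop k)[0] = l[k] := by
          rw [List.getElem_drop]
          simp
        rw [hek, ← this]
        exact List.getElem_mem h0
    have hPmono : ∀ k, P k ⊆ P (k + 1) := by
      intro k
      intro a ha
      simp only [hP, List.mem_toFinset] at *
      have : a ∈ (l.take (k + 1)).take k := by
        rw [List.take_take, min_eq_left (Nat.le_succ k)]
        exact ha
      exact List.take_subset _ _ this
    have hd0 : ∀ k, 0 ≤ d k := fun k => sub_nonneg.mpr (hmono _ _ (hPmono k))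
    have hP0 : P 0 = ∅ := by simp [hP]
    have hPm : P m = Finset.univ := by
      show (l.take l.length).toFinset = Finset.univ
      rw [List.take_length]
      exact Finset.toList_toFinset _
    -- pointwise bound
    have hpt : ∀ S : Finset E, ∀ k ≤ m,
        (∑ j ∈ Finset.range k, if e j ∈ S then d j else 0) ≤ f (S ∩ P k) := by
      intro S k
      induction k with
      | zero => intro _; simp [hP0, hnorm]
      | succ k ih =>
        intro hk
        have hkm : k < m := hk
        obtain ⟨hins, hnotin⟩ := hstep k hkm
        rw [Finset.sum_range_succ]
        by_cases hes : e k ∈ S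
        · have hSP : S ∩ P (k + 1) = insert (e k) (S ∩ P k) := by
            rw [hins, Finset.inter_insert_of_mem hes]
          have hsub' := hsub (insert (e k) (S ∩ P k)) (P k)
          have hu : insert (e k) (S ∩ P k) ∪ P k = P (k + 1) := by
            rw [hins]
            rw [Finset.insert_union]
            exact congrArg (insert (e k)) (Finset.union_eq_right.mpr Finset.inter_subset_right)
          have hi : insert (e k) (S ∩ P k) ∩ P k = S ∩ P k := by
            rw [Finset.insert_inter_of_notMem hnotin]
            rw [Finset.inter_assoc, Finset.inter_self]
          rw [hu, hi] at hsub'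
          rw [hSP]
          have : f (S ∩ P k) + d k ≤ f (insert (e k) (S ∩ P k)) := by
            simp only [hd]
            linarith
          simp only [if_pos hes]
          linarith [ih (le_of_lt hkm)]
        · have hSP : S ∩ P (k + 1) = S ∩ P k := by
            rw [hins, Finset.inter_insert_of_notMem hes]
          rw [hSP, if_neg hes, add_zero]
          exact ih (le_of_lt hkm)
    have hptS : ∀ S : Finset E,
        (∑ j ∈ Finset.range m, if e j ∈ S then d j else 0) ≤ f S := by
      intro S
      have := hpt S m le_rfl
      rwa [hPm, Finset.inter_univ] at this
    have htel : ∑ j ∈ Finset.range m, d j = f Finset.univ := by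
      have := Finset.sum_range_sub (fun k => f (P k)) m
      simp only [hd]
      rw [this, hPm, hP0, hnorm, sub_zero]
    calc α * f Finset.univ = ∑ j ∈ Finset.range m, α * d j := by
            rw [← Finset.mul_sum, htel]
      _ ≤ ∑ j ∈ Finset.range m,
            (∑ s : Finset E, if e j ∈ s then (μ s).toReal else 0) * d j := by
            apply Finset.sum_le_sum
            intro j _
            exact mul_le_mul_of_nonneg_right (hmarg (e j)) (hd0 j)
      _ = ∑ s : Finset E, (μ s).toReal *
            (∑ j ∈ Finset.range m, if e j ∈ s then d j else 0) := by
            simp only [Finset.sum_mul, ite_mul, zero_mul, Finset.mul_sum, mul_ite, mul_zero]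
            rw [Finset.sum_comm]
      _ ≤ ∑ s : Finset E, (μ s).toReal * f s := by
            apply Finset.sum_le_sum
            intro s _
            exact mul_le_mul_of_nonneg_left (hptS s) ENNReal.toReal_nonneg
end

section
/- Let f : 2^E → ℝ be a normalized monotone submodular function on a finite set E, and let T ⊆ E be a random subset such that P(i ∈ T) ≤ β for every i ∈ E, where β ∈ [0,1]. Then E[f(E) − f(E \ T)] ≤ β·f(E). -/
open Finset

private lemma marg_lemma {E : Type*} [DecidableEq E] (f : Finset E → ℝ)
    (hsub : ∀ X Y : Finset E, f (X ∪ Y) + f (X ∩ Y) ≤ f X + f Y)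
    {A B : Finset E} (hAB : A ⊆ B) {a : E} (ha : a ∉ B) :
    f (insert a B) - f B ≤ f (insert a A) - f A := by
  have h := hsub (insert a A) B
  have h1 : insert a A ∪ B = insert a B := by
    rw [insert_union, union_eq_right.mpr hAB]
  have h2 : insert a A ∩ B = A := by
    ext x
    simp only [mem_inter, mem_insert]
    constructor
    · rintro ⟨rfl | hx, hxB⟩
      · exact absurd hxB ha
      · exact hx
    · intro hx
      exact ⟨Or.inr hx, hAB hx⟩
  rw [h1, h2] at h
  linarith

/-- Probabilistic packing lemma: if `f` is a normalized monotone submodular function on a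
finite set `E` and `T` is a random subset with `P(i ∈ T) ≤ β` for every `i`, then
`E[f(E) − f(E \ T)] ≤ β · f(E)`. The random subset is modeled by a probability mass
function `μ` on `Finset E`. -/
theorem packing_lemma {E : Type*} [Fintype E] [DecidableEq E]
    (f : Finset E → ℝ)
    (hnorm : f ∅ = 0)
    (hmono : ∀ X Y : Finset E, X ⊆ Y → f X ≤ f Y)
    (hsub : ∀ X Y : Finset E, f (X ∪ Y) + f (X ∩ Y) ≤ f X + f Y)
    (β : ℝ) (hβ0 : 0 ≤ β) (hβ1 : β ≤ 1)
    (μ : PMF (Finset E))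
    (hmarg : ∀ i : E, ∑ s : Finset E, (if i ∈ s then (μ s).toReal else 0) ≤ β) :
    ∑ s : Finset E, (μ s).toReal * (f Finset.univ - f (Finset.univ \ s)) ≤ β * f Finset.univ := by
  classical
  set n := Fintype.card E with hn
  let e : E ≃ Fin n := Fintype.equivFin E
  set P : ℕ → Finset E := fun k => univ.filter (fun i => (e i : ℕ) < k) with hP
  set d : E → ℝ := fun i => f (univ \ P (e i)) - f (univ \ P ((e i : ℕ) + 1)) with hd
  -- d is nonnegative
  have hPmono : ∀ k, P k ⊆ P (k + 1) := by
    intro k x hx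
    simp only [hP, mem_filter] at hx ⊢
    exact ⟨hx.1, Nat.lt_succ_of_lt hx.2⟩
  have hdnn : ∀ i : E, 0 ≤ d i := by
    intro i
    have := hmono (univ \ P ((e i : ℕ) + 1)) (univ \ P (e i))
      (sdiff_subset_sdiff (Subset.refl _) (hPmono _))
    simp only [hd]
    linarith
  -- key lemma
  have key : ∀ (k : ℕ) (s : Finset E),
      f univ - f (univ \ s.filter (fun i => (e i : ℕ) < k)) ≤
        ∑ i ∈ s.filter (fun i => (e i : ℕ) < k), d i := by
    intro k
    induction k with
    | zero =>
      intro s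
      simp
    | succ k ih =>
      intro s
      by_cases hex : ∃ a ∈ s, (e a : ℕ) = k
      · obtain ⟨a, has, hak⟩ := hex
        have hfilt : s.filter (fun i => (e i : ℕ) < k + 1)
            = insert a (s.filter (fun i => (e i : ℕ) < k)) := by
          ext x
          simp only [mem_filter, mem_insert, Nat.lt_succ_iff_lt_or_eq]
          constructor
          · rintro ⟨hxs, hlt | heq⟩
            · exact Or.inr ⟨hxs, hlt⟩
            · left
              apply e.injective
              exact Fin.ext (heq.trans hak.symm)
          · rintro (rfl | ⟨hxs, hlt⟩)
            · exact ⟨has, Or.inr hak⟩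
            · exact ⟨hxs, Or.inl hlt⟩
        set sk := s.filter (fun i => (e i : ℕ) < k) with hsk
        have hansk : a ∉ sk := by
          simp only [hsk, mem_filter, hak]
          intro h
          exact absurd h.2 (lt_irrefl k)
        -- B := univ \ insert a sk, A := univ \ P (k+1)
        have haB : a ∉ univ \ insert a sk := by simp
        have haA : a ∉ univ \ P (k + 1) := by
          simp [hP, hak]
        have hAB : univ \ P (k + 1) ⊆ univ \ insert a sk := by
          apply sdiff_subset_sdiff (Subset.refl _)
          intro x hx
          simp only [mem_insert] at hx
          simp only [hP, mem_filter, mem_univ, true_and]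
          rcases hx with rfl | hx
          · omega
          · simp only [hsk, mem_filter] at hx
            omega
        have hB : insert a (univ \ insert a sk) = univ \ sk := by
          ext x
          simp only [mem_insert, mem_sdiff, mem_univ, true_and]
          constructor
          · rintro (rfl | hx)
            · exact hansk
            · exact fun hxsk => hx (Or.inr hxsk)
          · intro hx
            by_cases hxa : x = a
            · exact Or.inl hxa
            · refine Or.inr fun h => ?_
              rcases h with rfl | h
              · exact hxa rfl
              · exact hx h
        have hA : insert a (univ \ P (k + 1)) = univ \ P k := by
          ext x
          simp only [mem_insert, mem_sdiff, mem_univ, true_and, hP, mem_filter]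
          constructor
          · rintro (rfl | hx)
            · omega
            · intro h
              exact hx (Nat.lt_succ_of_lt h)
          · intro hx
            by_cases hxa : x = a
            · exact Or.inl hxa
            · right
              intro h
              have hx' : (e x : ℕ) = k := by omega
              exact hxa (e.injective (Fin.ext (hx'.trans hak.symm)))
        have hmarg' := marg_lemma f hsub hAB haB
        rw [hB, hA] at hmarg'
        have hda : d a = f (univ \ P k) - f (univ \ P (k + 1)) := by
          simp [hd, hak]
        have ihs : f univ - f (univ \ sk) ≤ ∑ i ∈ sk, d i := ih s
        rw [hfilt, sum_insert hansk, hda]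
        linarith
      · have hfilt : s.filter (fun i => (e i : ℕ) < k + 1)
            = s.filter (fun i => (e i : ℕ) < k) := by
          ext x
          simp only [mem_filter, Nat.lt_succ_iff_lt_or_eq]
          constructor
          · rintro ⟨hxs, hlt | heq⟩
            · exact ⟨hxs, hlt⟩
            · exact absurd ⟨x, hxs, heq⟩ hex
          · rintro ⟨hxs, hlt⟩
            exact ⟨hxs, Or.inl hlt⟩
        rw [hfilt]
        exact ih s
  -- specialize to k = n : filter is identity
  have key' : ∀ s : Finset E, f univ - f (univ \ s) ≤ ∑ i ∈ s, d i := by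
    intro s
    have hfilt : s.filter (fun i => (e i : ℕ) < n) = s := by
      apply filter_true_of_mem
      intro x _
      exact (e x).isLt
    have := key n s
    rwa [hfilt] at this
  -- telescoping sum of d over univ equals f univ
  have htel : ∑ i : E, d i = f univ := by
    have hre : ∑ i : E, d i = ∑ j : Fin n, (f (univ \ P j) - f (univ \ P ((j : ℕ) + 1))) := by
      exact Fintype.sum_equiv e _ _ (fun i => rfl)
    rw [hre, Fin.sum_univ_eq_sum_range (fun j => f (univ \ P j) - f (univ \ P (j + 1)))]
    rw [Finset.sum_range_sub' (fun k => f (univ \ P k))]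
    have hP0 : P 0 = ∅ := by
      ext x; simp [hP]
    have hPn : P n = univ := by
      ext x; simp [hP, (e x).isLt]
    rw [hP0, hPn, sdiff_empty, sdiff_self]
    simp [hnorm]
  -- main chain
  have hμnn : ∀ s : Finset E, (0:ℝ) ≤ (μ s).toReal := fun s => ENNReal.toReal_nonneg
  calc ∑ s : Finset E, (μ s).toReal * (f univ - f (univ \ s))
      ≤ ∑ s : Finset E, (μ s).toReal * ∑ i ∈ s, d i := by
        apply sum_le_sum
        intro s _
        exact mul_le_mul_of_nonneg_left (key' s) (hμnn s)
    _ = ∑ s : Finset E, ∑ i : E, (if i ∈ s then (μ s).toReal else 0) * d i := by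
        apply sum_congr rfl
        intro s _
        rw [mul_sum]
        have hterm : ∀ i : E, (if i ∈ s then (μ s).toReal else 0) * d i
            = if i ∈ s then (μ s).toReal * d i else 0 := by
          intro i; split <;> simp
        simp only [hterm]
        rw [sum_ite_mem, univ_inter]
    _ = ∑ i : E, (∑ s : Finset E, (if i ∈ s then (μ s).toReal else 0)) * d i := by
        rw [Finset.sum_comm]
        apply sum_congr rfl
        intro i _
        rw [sum_mul]
    _ ≤ ∑ i : E, β * d i := by
        apply sum_le_sum
        intro i _
        exact mul_le_mul_of_nonneg_right (hmarg i) (hdnn i)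
    _ = β * f univ := by rw [← mul_sum, htel]
end

section
/- Let D ⊆ 2^E be a feasible domain and X, Y ∈ D with exchange map (S, T): S : 2^{Y\X} → 2^{Y\X}, T : 2^{Y\X} → 2^{X\Y} (possibly random) satisfying S(R) ⊆ R and X ∪ S(R) \ T(R) ∈ D for all R. Suppose the exchange map is (α,β)-uniform, i.e., P(y ∈ S(R)) ≥ α for all y ∈ Y\X and P(x ∈ T(R)) ≤ β for all x ∈ X\Y, where R ⊆ Y\X is random. Then for any normalized monotone submodular f : 2^E → ℝ_{≥0}, E[f(X ∪ S(R) \ T(R)) − f(X)] ≥ α·f(X ∪ Y) − (α+β)·f(X). -/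
/-!
Split the exchange into an addition and a removal: since `T(R) ⊆ X`, submodularity gives
`f(X ∪ S \ T) - f X ≥ (f(X ∪ S) - f X) - (f X - f(X \ T))`. Both terms are controlled by one
covering inequality: if each element of `V` lies in a random set `S` with probability at
least `α`, then `E[g S - g ∅] ≥ α (g V - g ∅)` for monotone submodular `g` (add the elements
of `V` one at a time and use diminishing returns). Applied to `A ↦ f(X ∪ A)` on `V = Y \ X` it
bounds the gain below by `α (f(X ∪ Y) - f X)`; applied to `f` and the random set `X \ T`, which
contains each element of `X` with probability at least `1 - β`, it bounds the expected loss by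
`β f X`.
-/

open Finset

theorem PMF.sum_toReal_eq_one {α : Type*} [Fintype α] (μ : PMF α) :
    ∑ a, (μ a).toReal = 1 := by
  rw [← ENNReal.toReal_sum fun a _ => μ.apply_ne_top a, ← tsum_fintype (L := .unconditional _),
    μ.tsum_coe, ENNReal.toReal_one]

section

variable {E ι : Type*} [DecidableEq E]

def Submodular (g : Finset E → ℝ) : Prop :=
  ∀ A B : Finset E, g (A ∪ B) + g (A ∩ B) ≤ g A + g B

namespace Submodular

variable {g : Finset E → ℝ}

theorem insert_sub_le_insert_sub (hg : Submodular g) {s P : Finset E} {a : E} (hsP : s ⊆ P)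
    (ha : a ∉ P) :
    g (insert a P) - g P ≤ g (insert a s) - g s := by
  have h := hg (insert a s) P
  rw [insert_union, union_eq_right.mpr hsP, insert_inter_of_notMem ha,
    inter_eq_left.mpr hsP] at h
  linarith

theorem comp_union_left (hg : Submodular g) (X : Finset E) : Submodular fun A => g (X ∪ A) := by
  intro A B
  have h := hg (X ∪ A) (X ∪ B)
  rwa [← union_union_distrib_left, ← union_inter_distrib_left] at h

theorem add_le_union_sdiff_add (hg : Submodular g) {X S T : Finset E} (hT : T ⊆ X) :
    g (X ∪ S) + g (X \ T) ≤ g ((X ∪ S) \ T) + g X := by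
  have h := hg ((X ∪ S) \ T) X
  have hunion : (X ∪ S) \ T ∪ X = X ∪ S := by
    ext x
    have := @hT x
    simp only [mem_union, mem_sdiff]
    tauto
  have hinter : (X ∪ S) \ T ∩ X = X \ T := by
    ext x
    simp only [mem_union, mem_sdiff, mem_inter]
    tauto
  rw [hunion, hinter] at h
  linarith

variable [Fintype ι] {p : ι → ℝ} {α : ℝ}

theorem mul_sub_le_sum_inter (hg : Submodular g) (hmono : Monotone g) (hp : ∀ ω, 0 ≤ p ω)
    (S : ι → Finset E) (V : Finset E)
    (hcover : ∀ v ∈ V, α ≤ ∑ ω, if v ∈ S ω then p ω else 0) :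
    α * (g V - g ∅) ≤ ∑ ω, p ω * (g (S ω ∩ V) - g ∅) := by
  induction V using Finset.induction_on with
  | empty => simp
  | @insert a V ha ih =>
    set c := g (insert a V) - g V
    have hc : 0 ≤ c := sub_nonneg.mpr (hmono (subset_insert a V))
    have hstep : ∀ ω, (if a ∈ S ω then p ω else 0) * c + p ω * (g (S ω ∩ V) - g ∅) ≤
        p ω * (g (S ω ∩ insert a V) - g ∅) := by
      intro ω
      by_cases haS : a ∈ S ω
      · have hinc := hg.insert_sub_le_insert_sub (inter_subset_right (s₁ := S ω)) ha
        rw [inter_insert_of_mem haS, if_pos haS]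
        nlinarith [hp ω]
      · rw [inter_insert_of_notMem haS, if_neg haS]
        simp
    have hsum := sum_le_sum fun ω (_ : ω ∈ univ) => hstep ω
    rw [sum_add_distrib, ← sum_mul] at hsum
    have ha_cover := mul_le_mul_of_nonneg_right (hcover a (mem_insert_self a V)) hc
    have ih' := ih fun v hv => hcover v (mem_insert_of_mem hv)
    linarith

theorem mul_sub_le_sum (hg : Submodular g) (hmono : Monotone g) (hp : ∀ ω, 0 ≤ p ω)
    (S : ι → Finset E) (V : Finset E)
    (hcover : ∀ v ∈ V, α ≤ ∑ ω, if v ∈ S ω then p ω else 0) :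
    α * (g V - g ∅) ≤ ∑ ω, p ω * (g (S ω) - g ∅) :=
  (hg.mul_sub_le_sum_inter hmono hp S V hcover).trans <| sum_le_sum fun ω _ =>
    mul_le_mul_of_nonneg_left (by gcongr; exact hmono inter_subset_left) (hp ω)

theorem sum_mul_sub_sdiff_le (hg : Submodular g) (hmono : Monotone g) (h0 : g ∅ = 0)
    (hp : ∀ ω, 0 ≤ p ω) (hp1 : ∑ ω, p ω = 1) {β : ℝ} (T : ι → Finset E)
    (X : Finset E) (hT : ∀ x ∈ X, ∑ ω, (if x ∈ T ω then p ω else 0) ≤ β) :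
    ∑ ω, p ω * (g X - g (X \ T ω)) ≤ β * g X := by
  have hcover : ∀ x ∈ X, 1 - β ≤ ∑ ω, if x ∈ X \ T ω then p ω else 0 := by
    intro x hx
    have hsplit : ∀ ω,
        (if x ∈ X \ T ω then p ω else 0) = p ω - if x ∈ T ω then p ω else 0 := by
      intro ω
      by_cases hxT : x ∈ T ω <;> simp [hx, hxT]
    rw [sum_congr rfl fun ω _ => hsplit ω, sum_sub_distrib, hp1]
    linarith [hT x hx]
  have h := hg.mul_sub_le_sum hmono hp (fun ω => X \ T ω) X hcover
  simp only [h0, sub_zero] at h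
  simp only [mul_sub, sum_sub_distrib, ← sum_mul, hp1]
  linarith

end Submodular

end

theorem exchange_expectation_submodular_general {E : Type*} [Fintype E] [DecidableEq E]
    (X Y : Finset E)
    (f : Finset E → ℝ)
    (hnorm : f ∅ = 0)
    (hmono : ∀ A B : Finset E, A ⊆ B → f A ≤ f B)
    (hsub : ∀ A B : Finset E, f (A ∪ B) + f (A ∩ B) ≤ f A + f B)
    (α β : ℝ) (hβ : 0 ≤ β)
    (μ : PMF (Finset E))
    (S T : Finset E → Finset E)
    (hTX : ∀ r, T r ⊆ X \ Y)
    (hmargS : ∀ y ∈ Y \ X, α ≤ ∑ r : Finset E, (if y ∈ S r then (μ r).toReal else 0))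
    (hmargT : ∀ x ∈ X \ Y, ∑ r : Finset E, (if x ∈ T r then (μ r).toReal else 0) ≤ β) :
    α * f (X ∪ Y) - (α + β) * f X ≤
      ∑ r : Finset E, (μ r).toReal * (f ((X ∪ S r) \ T r) - f X) := by
  have hf : Submodular f := hsub
  have hfmono : Monotone f := fun A B => hmono A B
  have hp : ∀ r, 0 ≤ (μ r).toReal := fun r => ENNReal.toReal_nonneg
  have hgain := (hf.comp_union_left X).mul_sub_le_sum
    (fun A B h => hfmono (union_subset_union_right h)) hp S (Y \ X) hmargS
  simp only [union_sdiff_self_eq_union, union_empty] at hgain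
  have hTX' : ∀ x ∈ X, ∑ r, (if x ∈ T r then (μ r).toReal else 0) ≤ β := by
    intro x hx
    by_cases hxY : x ∈ Y
    · simpa [fun r => notMem_mono (hTX r) (notMem_sdiff_of_mem_right hxY)] using hβ
    · exact hmargT x (mem_sdiff.mpr ⟨hx, hxY⟩)
  have hloss := hf.sum_mul_sub_sdiff_le hfmono hnorm hp μ.sum_toReal_eq_one T X hTX'
  have hexchange : ∀ r,
      (μ r).toReal * (f (X ∪ S r) - f X) - (μ r).toReal * (f X - f (X \ T r)) ≤
        (μ r).toReal * (f ((X ∪ S r) \ T r) - f X) := fun r => by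
    nlinarith [hf.add_le_union_sdiff_add (S := S r) ((hTX r).trans sdiff_subset), hp r]
  have hsum := sum_le_sum fun r (_ : r ∈ univ) => hexchange r
  rw [sum_sub_distrib] at hsum
  linarith

/-- Expected gain of an `(α,β)`-uniform exchange map, submodular objective case.
`D` is a feasible domain, `X, Y ∈ D`, and `(S, T)` is an exchange map between `X` and
`Y`: `S(R) ⊆ R` and `X ∪ S(R) \ T(R) ∈ D` for every `R ⊆ Y \ X`, with `T(R) ⊆ X \ Y`.
The randomness of `R ⊆ Y \ X` is modeled by a PMF `μ` supported on subsets of `Y \ X`.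
If `P(y ∈ S(R)) ≥ α` for all `y ∈ Y \ X` and `P(x ∈ T(R)) ≤ β` for all `x ∈ X \ Y`,
then for any normalized monotone submodular `f ≥ 0`,
`E[f(X ∪ S(R) \ T(R)) − f(X)] ≥ α·f(X ∪ Y) − (α+β)·f(X)`. -/
theorem exchange_expectation_submodular {E : Type*} [Fintype E] [DecidableEq E]
    (D : Set (Finset E)) (X Y : Finset E) (hX : X ∈ D) (hY : Y ∈ D)
    (f : Finset E → ℝ)
    (hnn : ∀ Z : Finset E, 0 ≤ f Z)
    (hnorm : f ∅ = 0)
    (hmono : ∀ A B : Finset E, A ⊆ B → f A ≤ f B)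
    (hsub : ∀ A B : Finset E, f (A ∪ B) + f (A ∩ B) ≤ f A + f B)
    (α β : ℝ) (hα : 0 ≤ α) (hβ : 0 ≤ β)
    (μ : PMF (Finset E)) (hsupp : ∀ r : Finset E, μ r ≠ 0 → r ⊆ Y \ X)
    (S T : Finset E → Finset E)
    (hSR : ∀ r, S r ⊆ r) (hTX : ∀ r, T r ⊆ X \ Y)
    (hfeas : ∀ r ⊆ Y \ X, (X ∪ S r) \ T r ∈ D)
    (hmargS : ∀ y ∈ Y \ X, α ≤ ∑ r : Finset E, (if y ∈ S r then (μ r).toReal else 0))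
    (hmargT : ∀ x ∈ X \ Y, ∑ r : Finset E, (if x ∈ T r then (μ r).toReal else 0) ≤ β) :
    α * f (X ∪ Y) - (α + β) * f X ≤
      ∑ r : Finset E, (μ r).toReal * (f ((X ∪ S r) \ T r) - f X) :=
  exchange_expectation_submodular_general X Y f hnorm hmono hsub α β hβ μ S T hTX hmargS hmargT
end

section
/- Let D₁, ..., Dₙ ⊆ 2^E be set families, and suppose each Dᵢ admits, for given X, Y ∈ D₁ ∩ ... ∩ Dₙ, an (α, βᵢ)-uniform exchange map (S, Tᵢ) with the same first component S. Then D₁ ∩ ... ∩ Dₙ admits an (α, β₁ + ... + βₙ)-uniform exchange map between X and Y, given by (S, T) with T(R) = T₁(R) ∪ ... ∪ Tₙ(R). -/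
/-- Composition of uniform exchange maps. If each downward-closed family `D i` admits an
`(α, β i)`-uniform exchange map `(S, T i)` between `X, Y ∈ ⋂ i, D i` with the same first
component `S`, then the intersection `⋂ i, D i` admits an `(α, Σ i, β i)`-uniform
exchange map, namely `(S, R ↦ ⋃ i, T i R)`. Randomness of `R ⊆ Y \ X` is modeled by a
PMF `μ`. -/
theorem exchange_map_composition {E : Type*} [Fintype E] [DecidableEq E]
    (n : ℕ) (D : Fin n → Set (Finset E))
    (hdown : ∀ i : Fin n, ∀ A B : Finset E, A ⊆ B → B ∈ D i → A ∈ D i)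
    (X Y : Finset E) (hX : ∀ i, X ∈ D i) (hY : ∀ i, Y ∈ D i)
    (α : ℝ) (β : Fin n → ℝ)
    (μ : PMF (Finset E)) (hsupp : ∀ r : Finset E, μ r ≠ 0 → r ⊆ Y \ X)
    (S : Finset E → Finset E) (T : Fin n → Finset E → Finset E)
    (hSR : ∀ r, S r ⊆ r)
    (hTX : ∀ i r, T i r ⊆ X \ Y)
    (hfeas : ∀ i : Fin n, ∀ r ⊆ Y \ X, (X ∪ S r) \ T i r ∈ D i)
    (hmargS : ∀ y ∈ Y \ X, α ≤ ∑ r : Finset E, (if y ∈ S r then (μ r).toReal else 0))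
    (hmargT : ∀ i : Fin n, ∀ x ∈ X \ Y,
      ∑ r : Finset E, (if x ∈ T i r then (μ r).toReal else 0) ≤ β i) :
    (∀ r, S r ⊆ r) ∧
    (∀ r, (Finset.univ.biUnion fun i : Fin n => T i r) ⊆ X \ Y) ∧
    (∀ i : Fin n, ∀ r ⊆ Y \ X,
      (X ∪ S r) \ (Finset.univ.biUnion fun i : Fin n => T i r) ∈ D i) ∧
    (∀ y ∈ Y \ X, α ≤ ∑ r : Finset E, (if y ∈ S r then (μ r).toReal else 0)) ∧
    (∀ x ∈ X \ Y,
      ∑ r : Finset E,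
        (if x ∈ Finset.univ.biUnion (fun i : Fin n => T i r) then (μ r).toReal else 0)
        ≤ ∑ i : Fin n, β i) := by
  refine ⟨hSR, ?_, ?_, hmargS, ?_⟩
  · intro r
    exact Finset.biUnion_subset.2 fun i _ => hTX i r
  · intro i r hr
    refine hdown i _ _ ?_ (hfeas i r hr)
    exact Finset.sdiff_subset_sdiff le_rfl (Finset.subset_biUnion_of_mem (fun j => T j r) (Finset.mem_univ i))
  · intro x hx
    by_cases hn : n = 0
    · subst hn
      simp only [Finset.univ_eq_empty, Finset.biUnion_empty, Finset.notMem_empty, if_false,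
        Finset.sum_const_zero]
      simp
    calc ∑ r : Finset E, (if x ∈ Finset.univ.biUnion (fun i : Fin n => T i r) then (μ r).toReal else 0)
        ≤ ∑ r : Finset E, ∑ i : Fin n, (if x ∈ T i r then (μ r).toReal else 0) := by
          refine Finset.sum_le_sum fun r _ => ?_
          split_ifs with h
          · obtain ⟨i, _, hi⟩ := Finset.mem_biUnion.1 h
            calc (μ r).toReal = (if x ∈ T i r then (μ r).toReal else 0) := by simp [hi]
              _ ≤ _ := Finset.single_le_sum (f := fun j : Fin n => if x ∈ T j r then (μ r).toReal else 0) (fun j _ => by by_cases h : x ∈ T j r <;> simp [h, ENNReal.toReal_nonneg]) (Finset.mem_univ i)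
          · positivity
      _ = ∑ i : Fin n, ∑ r : Finset E, (if x ∈ T i r then (μ r).toReal else 0) :=
          Finset.sum_comm
      _ ≤ ∑ i : Fin n, β i := Finset.sum_le_sum fun i _ => hmargT i x hx
end

section
/- Let B be the base family of a matroid on ground set E, and X, Y ∈ B. Let R ⊆ Y\X be a random subset with each element included independently with probability p. Then there exists a map T : 2^{Y\X} → 2^{X\Y} such that X ∪ R \ T(R) ∈ B for every R ⊆ Y\X, and P(x ∈ T(R)) ≤ p for every x ∈ X\Y. That is, the base family admits a (p,p)-uniform exchange map with S(R) = R. -/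
/-!
Apply the exchange property separately to each layer of `Y \ X`: the `k`-subsets of `Y \ X`
cover every `y ∈ Y \ X` equally often, so the sets exchanged for them cover every
`x ∈ X \ Y` equally often too. Since the Bernoulli weight of `R` depends only on `#R`, the
event `x ∈ T R` then has the same probability as `y ∈ R`, which is `p`.
-/

open Finset

lemma card_filter_univ_equivFin_symm {α : Type*} (s : Finset α) (P : α → Prop)
    [DecidablePred P] : #{i | P (s.equivFin.symm i)} = #{a ∈ s | P a} := by
  refine card_bij' (fun i _ => s.equivFin.symm i)
    (fun a ha => s.equivFin ⟨a, (mem_filter.1 ha).1⟩) ?_ ?_ ?_ ?_ <;> simp_all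

lemma card_filter_mem_powersetCard_eq {α : Type*} [DecidableEq α] {s : Finset α} {y z : α}
    (hy : y ∈ s) (hz : z ∈ s) (k : ℕ) :
    #{r ∈ s.powersetCard k | y ∈ r} = #{r ∈ s.powersetCard k | z ∈ r} := by
  rcases k with _ | k
  · simp [filter_singleton]
  · simp only [← singleton_subset_iff]
    rw [card_filter_powersetCard_subset _ _ _ (singleton_subset_iff.2 hy) (by simp),
      card_filter_powersetCard_subset _ _ _ (singleton_subset_iff.2 hz) (by simp),
      card_singleton, card_singleton]

lemma sum_powerset_mul_ite {α R : Type*} [Semiring R] (s : Finset α) (w : ℕ → R)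
    (P : Finset α → Prop) [DecidablePred P] :
    ∑ r ∈ s.powerset, w #r * (if P r then 1 else 0) =
      ∑ k ∈ range (#s + 1), w k * #{r ∈ s.powersetCard k | P r} := by
  rw [sum_powerset]
  refine sum_congr rfl fun k _ => ?_
  rw [card_filter, Nat.cast_sum, mul_sum]
  refine sum_congr rfl fun r hr => ?_
  rw [(mem_powersetCard.1 hr).2]
  split_ifs <;> simp

lemma sum_powerset_bernoulli_mem {α R : Type*} [DecidableEq α] [CommRing R] {s : Finset α}
    {y : α} (hy : y ∈ s) (p : R) :
    ∑ r ∈ s.powerset, p ^ #r * (1 - p) ^ (#s - #r) * (if y ∈ r then 1 else 0) = p := by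
  obtain ⟨t, hyt, rfl⟩ : ∃ t, y ∉ t ∧ s = insert y t :=
    ⟨s.erase y, notMem_erase y s, (insert_erase hy).symm⟩
  have hy_notMem : ∀ r ∈ t.powerset, y ∉ r := fun r hr h => hyt (mem_powerset.1 hr h)
  rw [sum_powerset_insert hyt, card_insert_of_notMem hyt]
  calc _ = 0 + p * ∑ r ∈ t.powerset, p ^ #r * (1 - p) ^ (#t - #r) := by
        congr 1
        · exact sum_eq_zero fun r hr => by simp [hy_notMem r hr]
        · rw [mul_sum]
          refine sum_congr rfl fun r hr => ?_
          rw [card_insert_of_notMem (hy_notMem r hr), Nat.add_sub_add_right,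
            if_pos (mem_insert_self y r)]
          ring
    _ = p := by rw [sum_pow_mul_eq_add_pow]; simp

section RotaExchange

variable {E : Type*} [DecidableEq E]

def RotaExchange (B : Set (Finset E)) (X Y : Finset E) : Prop :=
  ∀ (n q : ℕ) (A : Fin n → Finset E),
    (∀ i, A i ⊆ Y \ X) →
    (∀ y ∈ Y \ X, #{i | y ∈ A i} = q) →
    ∃ Bs : Fin n → Finset E,
      (∀ i, Bs i ⊆ X \ Y ∧ (X ∪ A i) \ Bs i ∈ B) ∧ ∀ x ∈ X \ Y, #{i | x ∈ Bs i} = q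

variable {B : Set (Finset E)} {X Y : Finset E}

theorem RotaExchange.exists_of_finset (h : RotaExchange B X Y) {𝒜 : Finset (Finset E)}
    {q : ℕ} (h𝒜 : ∀ A ∈ 𝒜, A ⊆ Y \ X) (hcov : ∀ y ∈ Y \ X, #{A ∈ 𝒜 | y ∈ A} = q) :
    ∃ t : Finset E → Finset E, (∀ A ∈ 𝒜, t A ⊆ X \ Y ∧ (X ∪ A) \ t A ∈ B) ∧
      ∀ x ∈ X \ Y, #{A ∈ 𝒜 | x ∈ t A} = q := by
  obtain ⟨Bs, hBs, hcovBs⟩ := h #𝒜 q (fun i => 𝒜.equivFin.symm i)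
    (fun i => h𝒜 _ (𝒜.equivFin.symm i).2)
    (fun y hy => (card_filter_univ_equivFin_symm 𝒜 (y ∈ ·)).trans (hcov y hy))
  refine ⟨fun A => if hA : A ∈ 𝒜 then Bs (𝒜.equivFin ⟨A, hA⟩) else ∅,
    fun A hA => by simpa [hA] using hBs (𝒜.equivFin ⟨A, hA⟩), fun x hx => ?_⟩
  rw [← hcovBs x hx, ← card_filter_univ_equivFin_symm]
  simp

theorem RotaExchange.exists_card_filter_powersetCard_eq (h : RotaExchange B X Y)
    (q : ℕ → ℕ) (hq : ∀ k, ∀ y ∈ Y \ X, #{r ∈ (Y \ X).powersetCard k | y ∈ r} = q k) :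
    ∃ T : Finset E → Finset E, (∀ R ⊆ Y \ X, T R ⊆ X \ Y ∧ (X ∪ R) \ T R ∈ B) ∧
      ∀ x ∈ X \ Y, ∀ k, #{r ∈ (Y \ X).powersetCard k | x ∈ T r} = q k := by
  choose t ht hcount using fun k =>
    h.exists_of_finset (fun A hA => (mem_powersetCard.1 hA).1) (hq k)
  refine ⟨fun R => t #R R, fun R hR => ht _ R (mem_powersetCard.2 ⟨hR, rfl⟩),
    fun x hx k => ?_⟩
  rw [← hcount k x hx]
  exact congrArg card (filter_congr fun r hr => by simp only [(mem_powersetCard.1 hr).2])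

end RotaExchange

theorem matroid_base_uniform_exchange_map_general {E : Type*} [DecidableEq E]
    (B : Set (Finset E)) (X Y : Finset E)
    (hRota : ∀ (n q : ℕ) (A : Fin n → Finset E),
      (∀ i, A i ⊆ Y \ X) →
      (∀ y ∈ Y \ X, (Finset.univ.filter fun i : Fin n => y ∈ A i).card = q) →
      ∃ Bs : Fin n → Finset E,
        (∀ i, Bs i ⊆ X \ Y ∧ (X ∪ A i) \ Bs i ∈ B) ∧
        (∀ x ∈ X \ Y, (Finset.univ.filter fun i : Fin n => x ∈ Bs i).card = q))
    (p : ℝ) (hp0 : 0 < p) :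
    ∃ T : Finset E → Finset E,
      (∀ R ⊆ Y \ X, T R ⊆ X \ Y ∧ (X ∪ R) \ T R ∈ B) ∧
      (∀ x ∈ X \ Y,
        ∑ r ∈ (Y \ X).powerset,
          p ^ r.card * (1 - p) ^ ((Y \ X).card - r.card) *
            (if x ∈ T r then 1 else 0) ≤ p) := by
  have hRota : RotaExchange B X Y := hRota
  rcases (Y \ X).eq_empty_or_nonempty with hD | ⟨y₀, hy₀⟩
  · -- the covering condition is vacuous, so every layer can be given multiplicity `0`
    obtain ⟨T, hT, hcount⟩ :=
      hRota.exists_card_filter_powersetCard_eq (fun _ => 0) (by simp [hD])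
    refine ⟨T, hT, fun x hx => ?_⟩
    rw [sum_powerset_mul_ite _ (fun k => p ^ k * (1 - p) ^ (#(Y \ X) - k))]
    simp [hcount x hx, hp0.le]
  · obtain ⟨T, hT, hcount⟩ := hRota.exists_card_filter_powersetCard_eq
      (fun k => #{r ∈ (Y \ X).powersetCard k | y₀ ∈ r})
      (fun k _ hy => card_filter_mem_powersetCard_eq hy hy₀ k)
    refine ⟨T, hT, fun x hx => le_of_eq ?_⟩
    conv_rhs => rw [← sum_powerset_bernoulli_mem hy₀ p]
    rw [sum_powerset_mul_ite _ (fun k => p ^ k * (1 - p) ^ (#(Y \ X) - k)),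
      sum_powerset_mul_ite _ (fun k => p ^ k * (1 - p) ^ (#(Y \ X) - k))]
    simp only [hcount x hx]

/-- The base family of a matroid admits a `(p,p)`-uniform exchange map with `S(R) = R`.
The matroid base family `B` is given via its generalized Rota-exchange property
(hypothesis `hRota`). `R ⊆ Y \ X` is random with each element included independently
with probability `p`; the marginal `P(x ∈ T(R))` is written explicitly as a sum of
Bernoulli-product weights over the powerset of `Y \ X`. -/
theorem matroid_base_uniform_exchange_map {E : Type*} [DecidableEq E]
    (B : Set (Finset E)) (X Y : Finset E) (hX : X ∈ B) (hY : Y ∈ B)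
    (hRota : ∀ (n q : ℕ) (A : Fin n → Finset E),
      (∀ i, A i ⊆ Y \ X) →
      (∀ y ∈ Y \ X, (Finset.univ.filter fun i : Fin n => y ∈ A i).card = q) →
      ∃ Bs : Fin n → Finset E,
        (∀ i, Bs i ⊆ X \ Y ∧ (X ∪ A i) \ Bs i ∈ B) ∧
        (∀ x ∈ X \ Y, (Finset.univ.filter fun i : Fin n => x ∈ Bs i).card = q))
    (p : ℝ) (hp0 : 0 < p) (hp1 : p < 1) :
    ∃ T : Finset E → Finset E,
      (∀ R ⊆ Y \ X, T R ⊆ X \ Y ∧ (X ∪ R) \ T R ∈ B) ∧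
      (∀ x ∈ X \ Y,
        ∑ r ∈ (Y \ X).powerset,
          p ^ r.card * (1 - p) ^ ((Y \ X).card - r.card) *
            (if x ∈ T r then 1 else 0) ≤ p) :=
  matroid_base_uniform_exchange_map_general B X Y hRota p hp0
end

section
/- Let D be a k-exchange system on a finite set E, f : 2^E → ℝ_{≥0} a normalized monotone submodular function, X, Y ∈ D, and let {T_y}_{y ∈ Y\X} be the collection of subsets witnessing the k-exchange property. Then Σ_{y ∈ Y\X} ( f(X ∪ {y} \ T_y) − f(X) ) ≥ f(X ∪ Y) − (k+1)·f(X). -/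
/-!
Submodularity splits each exchange gain as
`f(X ∪ {y} \ T y) - f X ≥ (f(X ∪ {y}) - f X) - (f X - f(X \ T y))`.
The insertion gains add up to at least `f(X ∪ Y) - f X`. For the removal losses, remove the
elements of `X \ Y` one at a time: the loss of each `T y` is dominated by the marginal losses of
its elements along this chain, each marginal loss is charged at most `k` times, and the marginal
losses telescope to `f X - f(X \ Y) ≤ f X`.
-/

def IsSubmodular {E : Type*} [DecidableEq E] (f : Finset E → ℝ) : Prop :=
  ∀ A B : Finset E, f (A ∪ B) + f (A ∩ B) ≤ f A + f B

namespace IsSubmodular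

variable {E : Type*} [DecidableEq E] {f : Finset E → ℝ}

lemma union_sub_le_sum (hf : IsSubmodular f) (X S : Finset E) :
    f (X ∪ S) - f X ≤ ∑ y ∈ S, (f (X ∪ {y}) - f X) := by
  induction S using Finset.induction_on with
  | empty => simp
  | @insert a S ha ih =>
    have hunion : (X ∪ S) ∪ (X ∪ {a}) = X ∪ insert a S := by
      ext x; simp only [Finset.mem_union, Finset.mem_insert, Finset.mem_singleton]; tauto
    have hinter : (X ∪ S) ∩ (X ∪ {a}) = X := by
      ext x; by_cases hx : x = a <;> simp_all
    have := hf (X ∪ S) (X ∪ {a})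
    rw [hunion, hinter] at this
    rw [Finset.sum_insert ha]
    linarith

lemma union_singleton_add_sdiff_le (hf : IsSubmodular f) {X T : Finset E} {y : E}
    (hy : y ∉ T) : f (X ∪ {y}) + f (X \ T) ≤ f ((X ∪ {y}) \ T) + f X := by
  have hunion : ((X ∪ {y}) \ T) ∪ X = X ∪ {y} := by
    ext x; by_cases hx : x = y <;> simp_all
  have hinter : ((X ∪ {y}) \ T) ∩ X = X \ T := by
    ext x; simp only [Finset.mem_inter, Finset.mem_sdiff, Finset.mem_union]; tauto
  have := hf ((X ∪ {y}) \ T) X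
  rwa [hunion, hinter] at this

lemma sub_sdiff_le_erase_sub_sdiff (hf : IsSubmodular f) {X T : Finset E} {a : E}
    (ha : a ∉ T) : f X - f (X \ T) ≤ f (X.erase a) - f (X.erase a \ T) := by
  have hunion : X.erase a ∪ (X \ T) = X := by
    ext x; by_cases hx : x = a <;> simp_all
  have hinter : X.erase a ∩ (X \ T) = X.erase a \ T := by
    ext x; simp only [Finset.mem_inter, Finset.mem_sdiff, Finset.mem_erase]; tauto
  have := hf (X.erase a) (X \ T)
  rw [hunion, hinter] at this
  linarith

lemma sub_sdiff_le_ite_add (hf : IsSubmodular f) (X T : Finset E) (a : E) :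
    f X - f (X \ T) ≤ (if a ∈ T then f X - f (X.erase a) else 0) +
      (f (X.erase a) - f (X.erase a \ T.erase a)) := by
  by_cases ha : a ∈ T
  · have hchain : X.erase a \ T.erase a = X \ T := by
      ext x; by_cases hx : x = a <;> simp_all
    rw [if_pos ha, hchain]
    linarith
  · rw [if_neg ha, Finset.erase_eq_of_notMem ha, zero_add]
    exact hf.sub_sdiff_le_erase_sub_sdiff ha

lemma sum_sub_sdiff_le (hf : IsSubmodular f) (hmono : Monotone f) {ι : Type*} (S : Finset ι)
    (k : ℕ) (U : Finset E) (T : ι → Finset E) (hTU : ∀ y ∈ S, T y ⊆ U)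
    (hdeg : ∀ x ∈ U, (S.filter fun y => x ∈ T y).card ≤ k) (X : Finset E) :
    ∑ y ∈ S, (f X - f (X \ T y)) ≤ k * (f X - f (X \ U)) := by
  induction U using Finset.induction_on generalizing T X with
  | empty =>
    have hT : ∀ y ∈ S, T y = ∅ := fun y hy => Finset.subset_empty.1 (hTU y hy)
    simp +contextual [hT]
  | @insert a U ha ih =>
    set m := f X - f (X.erase a)
    have hm : 0 ≤ m := sub_nonneg.2 (hmono (Finset.erase_subset a X))
    have hfirst : ∑ y ∈ S, (if a ∈ T y then m else 0) ≤ k * m := by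
      rw [← Finset.sum_filter, Finset.sum_const, nsmul_eq_mul]
      exact mul_le_mul_of_nonneg_right
        (by exact_mod_cast hdeg a (Finset.mem_insert_self a U)) hm
    have hrest : ∑ y ∈ S, (f (X.erase a) - f (X.erase a \ (T y).erase a)) ≤
        k * (f (X.erase a) - f (X.erase a \ U)) := by
      refine ih (fun y => (T y).erase a) (fun y hy x hx => ?_) (fun x hx => ?_) (X.erase a)
      · obtain ⟨hxa, hxT⟩ := Finset.mem_erase.1 hx
        exact (Finset.mem_insert.1 (hTU y hy hxT)).resolve_left hxa
      · refine le_trans (Finset.card_le_card fun y hy => ?_) (hdeg x (Finset.mem_insert_of_mem hx))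
        simp only [Finset.mem_filter] at hy ⊢
        exact ⟨hy.1, Finset.mem_of_mem_erase hy.2⟩
    have hsplit := Finset.sum_le_sum fun y (_ : y ∈ S) => hf.sub_sdiff_le_ite_add X (T y) a
    rw [Finset.sum_add_distrib] at hsplit
    rw [Finset.erase_sdiff_comm, ← Finset.sdiff_insert] at hrest
    linarith

end IsSubmodular

theorem k_exchange_gain_general {E : Type*} [DecidableEq E]
    (k : ℕ)
    (X Y : Finset E)
    (T : E → Finset E)
    (hTsub : ∀ y ∈ Y \ X, T y ⊆ X \ Y)
    (hTdeg : ∀ x ∈ X \ Y, ((Y \ X).filter fun y => x ∈ T y).card ≤ k)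
    (f : Finset E → ℝ)
    (hnn : ∀ Z : Finset E, 0 ≤ f Z)
    (hmono : ∀ A B : Finset E, A ⊆ B → f A ≤ f B)
    (hsub : ∀ A B : Finset E, f (A ∪ B) + f (A ∩ B) ≤ f A + f B) :
    f (X ∪ Y) - (k + 1 : ℝ) * f X ≤
      ∑ y ∈ Y \ X, (f ((X ∪ {y}) \ T y) - f X) := by
  have hf : IsSubmodular f := hsub
  have hgain : f (X ∪ Y) - f X ≤ ∑ y ∈ Y \ X, (f (X ∪ {y}) - f X) := by
    simpa only [Finset.union_sdiff_self_eq_union] using hf.union_sub_le_sum X (Y \ X)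
  have hloss : ∑ y ∈ Y \ X, (f X - f (X \ T y)) ≤ k * f X :=
    (hf.sum_sub_sdiff_le hmono (Y \ X) k (X \ Y) T hTsub hTdeg X).trans
      (mul_le_mul_of_nonneg_left (by linarith [hnn (X \ (X \ Y))]) k.cast_nonneg)
  have hsplit : ∀ y ∈ Y \ X,
      (f (X ∪ {y}) - f X) - (f X - f (X \ T y)) ≤ f ((X ∪ {y}) \ T y) - f X := by
    intro y hy
    have hyT : y ∉ T y := fun h => (Finset.mem_sdiff.1 (hTsub y hy h)).2 (Finset.mem_sdiff.1 hy).1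
    linarith [hf.union_singleton_add_sdiff_le (X := X) hyT]
  have := Finset.sum_le_sum hsplit
  rw [Finset.sum_sub_distrib] at this
  linarith

/-- Local-search gain bound on a `k`-exchange system. `D` is a hereditary set system,
`X, Y ∈ D`, and `{T y}_{y ∈ Y \ X}` witnesses the `k`-exchange property: each `T y` is a
subset of `X \ Y` of size at most `k`, each `x ∈ X \ Y` appears in at most `k` of the
sets, and `X ∪ S \ ⋃_{y∈S} T y ∈ D` for every `S ⊆ Y \ X`. Then for any normalized
monotone submodular `f ≥ 0`,
`Σ_{y ∈ Y\X} (f(X ∪ {y} \ T y) − f(X)) ≥ f(X ∪ Y) − (k+1)·f(X)`. -/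
theorem k_exchange_gain {E : Type*} [Fintype E] [DecidableEq E]
    (k : ℕ) (D : Set (Finset E))
    (hher : ∀ A B : Finset E, A ⊆ B → B ∈ D → A ∈ D)
    (X Y : Finset E) (hX : X ∈ D) (hY : Y ∈ D)
    (T : E → Finset E)
    (hTsub : ∀ y ∈ Y \ X, T y ⊆ X \ Y)
    (hTcard : ∀ y ∈ Y \ X, (T y).card ≤ k)
    (hTdeg : ∀ x ∈ X \ Y, ((Y \ X).filter fun y => x ∈ T y).card ≤ k)
    (hfeas : ∀ S ⊆ Y \ X, (X ∪ S) \ S.biUnion T ∈ D)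
    (f : Finset E → ℝ)
    (hnn : ∀ Z : Finset E, 0 ≤ f Z)
    (hnorm : f ∅ = 0)
    (hmono : ∀ A B : Finset E, A ⊆ B → f A ≤ f B)
    (hsub : ∀ A B : Finset E, f (A ∪ B) + f (A ∩ B) ≤ f A + f B) :
    f (X ∪ Y) - (k + 1 : ℝ) * f X ≤
      ∑ y ∈ Y \ X, (f ((X ∪ {y}) \ T y) - f X) :=
  k_exchange_gain_general k X Y T hTsub hTdeg f hnn hmono hsub
end

section
/- Let w : E → ℝ_{>0} be item sizes with w_e ≤ 1/3 for all e, and suppose a finite multiset of items has total size at most 5/3. Then the items can be partitioned into two sets each of total size at most 1. -/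
lemma knapsack_split_aux (s : Multiset ℝ)
    (hsize : ∀ x ∈ s, 0 < x ∧ x ≤ 1 / 3) :
    ∃ t u : Multiset ℝ, t + u = s ∧ t.sum ≤ 1 ∧ (u = 0 ∨ 2/3 ≤ t.sum) := by
  induction s using Multiset.induction_on with
  | empty => exact ⟨0, 0, by simp, by simp, Or.inl rfl⟩
  | cons x s ih =>
    have hx := hsize x (Multiset.mem_cons_self x s)
    obtain ⟨t, u, htu, ht, hcase⟩ := ih (fun y hy => hsize y (Multiset.mem_cons_of_mem hy))
    rcases hcase with hu0 | hts
    · by_cases hle : t.sum + x ≤ 1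
      · exact ⟨x ::ₘ t, u, by rw [Multiset.cons_add, htu], by
          rw [Multiset.sum_cons]; linarith, Or.inl hu0⟩
      · refine ⟨t, x ::ₘ u, ?_, ht, Or.inr (by linarith [hx.2])⟩
        rw [← htu, Multiset.add_cons]
    · refine ⟨t, x ::ₘ u, ?_, ht, Or.inr hts⟩
      rw [← htu, Multiset.add_cons]

/-- Knapsack decomposition step: a finite multiset of item sizes, each in `(0, 1/3]`,
with total size at most `5/3`, can be partitioned into two parts each of total size at
most `1`. -/
theorem knapsack_split (s : Multiset ℝ)
    (hsize : ∀ x ∈ s, 0 < x ∧ x ≤ 1 / 3)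
    (hsum : s.sum ≤ 5 / 3) :
    ∃ t u : Multiset ℝ, t + u = s ∧ t.sum ≤ 1 ∧ u.sum ≤ 1 := by
  obtain ⟨t, u, htu, ht, hcase⟩ := knapsack_split_aux s hsize
  have hsums : t.sum + u.sum = s.sum := by rw [← htu, Multiset.sum_add]
  refine ⟨t, u, htu, ht, ?_⟩
  rcases hcase with hu0 | hts
  · simp [hu0]
  · linarith
end
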